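/- For each positive integer s there exists a positive integer t such that for every edge-coloring χ of the complete bipartite graph K_{t,t} with parts X and Y (with colors from an arbitrary set), there exist subsets X' ⊆ X and Y' ⊆ Y with |X'| = |Y'| = s such that the restriction of χ to the complete bipartite graph between X' and Y' is monochromatic, rainbow, X'-canonical, or Y'-canonical. -/
import Mathlib


open Finset

private def rbound (k : ℕ) : ℕ → ℕ
  | 0 => 0
  | N + 1 => k * rbound k N + 1

private lemma ramsey_pre {n : ℕ} {K : Type} [Fintype K] [DecidableEq K]
    (χ : Fin n → Fin n → K) :
    ∀ (N : ℕ) (S : Finset (Fin n)), rbound (Fintype.card K) N ≤ S.card →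
    ∃ H, H ⊆ S ∧ ∃ c : Fin n → K, H.card = N ∧
      ∀ i ∈ H, ∀ j ∈ H, i < j → χ i j = c i := by
  intro N
  induction N with
  | zero =>
    intro S _
    exact ⟨∅, empty_subset _, fun i => χ i i, card_empty, by simp⟩
  | succ N ih =>
    intro S hS
    have hpos : 0 < S.card := lt_of_lt_of_le (Nat.succ_pos _) hS
    set v := S.min' (card_pos.mp hpos) with hv
    have hvS : v ∈ S := S.min'_mem _
    haveI : Nonempty K := ⟨χ v v⟩
    have hcard : Fintype.card K * rbound (Fintype.card K) N ≤ (S.erase v).card := by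
      rw [card_erase_of_mem hvS]
      have : rbound (Fintype.card K) (N + 1) = Fintype.card K * rbound (Fintype.card K) N + 1 := rfl
      omega
    obtain ⟨t, -, ht⟩ := exists_le_card_fiber_of_mul_le_card_of_maps_to
      (f := fun j => χ v j) (t := (univ : Finset K))
      (fun a _ => mem_univ _) univ_nonempty (by simpa using hcard)
    obtain ⟨H', hH'sub, c', hH'card, hH'⟩ := ih _ ht
    have hH'T : H' ⊆ (S.erase v).filter (fun j => χ v j = t) := hH'sub
    refine ⟨insert v H', ?_, fun i => if i = v then t else c' i, ?_, ?_⟩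
    · intro x hx
      rcases mem_insert.mp hx with rfl | hx
      · exact hvS
      · exact mem_of_mem_erase (mem_filter.mp (hH'T hx)).1
    · rw [card_insert_of_notMem, hH'card]
      intro hvH'
      exact (notMem_erase v S) (mem_of_mem_filter _ (hH'T hvH'))
    · intro i hi j hj hij
      have hvlt : ∀ x ∈ H', v < x := by
        intro x hx
        have hxS : x ∈ S.erase v := mem_of_mem_filter _ (hH'T hx)
        exact lt_of_le_of_ne (S.min'_le x (mem_of_mem_erase hxS))
          (Ne.symm (ne_of_mem_erase hxS))
      rcases mem_insert.mp hi with rfl | hi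
      · have hj' : j ∈ H' := by
          rcases mem_insert.mp hj with rfl | h
          · exact absurd hij (lt_irrefl _)
          · exact h
        simp only [if_pos rfl]
        exact (mem_filter.mp (hH'T hj')).2
      · have hiv : i ≠ v := ne_of_gt (hvlt i hi)
        have hj' : j ∈ H' := by
          rcases mem_insert.mp hj with rfl | h
          · exact absurd (hij.trans (hvlt i hi)) (lt_irrefl _)
          · exact h
        simp only [if_neg hiv]
        exact hH' i hi j hj' hij

private lemma ramsey_pairs (K : Type) [Fintype K] [DecidableEq K] (m : ℕ) (hm : 1 ≤ m) :
    ∃ N : ℕ, 0 < N ∧ ∀ n, N ≤ n → ∀ χ : Fin n → Fin n → K,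
      ∃ (H : Finset (Fin n)) (t : K), H.card = m ∧
        ∀ i ∈ H, ∀ j ∈ H, i < j → χ i j = t := by
  classical
  set k := Fintype.card K with hk
  refine ⟨rbound k (k * (m - 1) + 1) + 1, Nat.succ_pos _, fun n hn χ => ?_⟩
  have hcard : rbound k (k * (m - 1) + 1) ≤ (univ : Finset (Fin n)).card := by
    rw [card_univ, Fintype.card_fin]; omega
  obtain ⟨H, -, c, hHcard, hH⟩ := ramsey_pre χ _ univ hcard
  have hHne : H.Nonempty := card_pos.mp (by omega)
  haveI : Nonempty K := ⟨c hHne.choose⟩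
  obtain ⟨t, -, ht⟩ := exists_lt_card_fiber_of_mul_lt_card_of_maps_to
    (f := c) (t := (univ : Finset K)) (s := H) (n := m - 1) (fun a _ => mem_univ _)
    (by rw [hHcard, card_univ, ← hk]; omega)
  obtain ⟨H', hH'sub, hH'card⟩ :=
    exists_subset_card_eq (show m ≤ (H.filter (fun x => c x = t)).card by omega)
  refine ⟨H', t, hH'card, fun i hi j hj hij => ?_⟩
  have hit : c i = t := (mem_filter.mp (hH'sub hi)).2
  have := hH i (mem_of_mem_filter _ (hH'sub hi)) j (mem_of_mem_filter _ (hH'sub hj)) hij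
  rw [this, hit]

private lemma ramsey_product' (K : Type) [Fintype K] [DecidableEq K] (m : ℕ) (hm : 1 ≤ m) :
    ∃ T : ℕ, 0 < T ∧ ∀ F : Fin T → Fin T → Fin T → Fin T → K,
      ∃ (X Y : Finset (Fin T)) (t : K), X.card = m ∧ Y.card = m ∧
        ∀ x ∈ X, ∀ x' ∈ X, ∀ y ∈ Y, ∀ y' ∈ Y, x < x' → y < y' → F x x' y y' = t := by
  classical
  obtain ⟨N0, hN0, h0⟩ := ramsey_pairs K m hm
  obtain ⟨N1, hN1, h1⟩ := ramsey_pairs (Fin N0 → Fin N0 → K) m hm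
  have hle : N0 ≤ max N0 N1 := le_max_left _ _
  refine ⟨max N0 N1, lt_of_lt_of_le hN0 hle, fun F => ?_⟩
  obtain ⟨Y, g, hYcard, hY⟩ := h1 (max N0 N1) (le_max_right _ _)
    (fun y y' i j => F (Fin.castLE hle i) (Fin.castLE hle j) y y')
  obtain ⟨H0, t, hH0card, hH0⟩ := h0 N0 le_rfl g
  refine ⟨H0.map (Fin.castLEEmb hle), Y, t, by rw [card_map, hH0card], hYcard, ?_⟩
  intro x hx x' hx' y hy y' hy' hxx' hyy'
  obtain ⟨i, hi, rfl⟩ := mem_map.mp hx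
  obtain ⟨j, hj, rfl⟩ := mem_map.mp hx'
  have hij : i < j := hxx'
  have h1' := congrFun (congrFun (hY y hy y' hy' hyy') i) j
  exact h1'.trans (hH0 i hi j hj hij)

private lemma exists_ordered_triple' {n : ℕ} (S : Finset (Fin n)) (h : 3 ≤ S.card) :
    ∃ a1 a2 a3 : Fin n, a1 ∈ S ∧ a2 ∈ S ∧ a3 ∈ S ∧ a1 < a2 ∧ a2 < a3 := by
  obtain ⟨T, hTS, hT⟩ := Finset.exists_subset_card_eq h
  let e := T.orderIsoOfFin hT
  refine ⟨e 0, e 1, e 2, hTS (e 0).2, hTS (e 1).2, hTS (e 2).2, ?_, ?_⟩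
  · exact Subtype.coe_lt_coe.mpr (e.lt_iff_lt.mpr (by decide))
  · exact Subtype.coe_lt_coe.mpr (e.lt_iff_lt.mpr (by decide))

/-- The edge-coloring `χ` is monochromatic on the complete bipartite graph with
parts `X` and `Y`: all edges get the same color. -/
def MonochromaticOn {α β C : Type*} (χ : α → β → C) (X : Finset α) (Y : Finset β) : Prop :=
  ∀ x ∈ X, ∀ y ∈ Y, ∀ x' ∈ X, ∀ y' ∈ Y, χ x y = χ x' y'

/-- The edge-coloring `χ` is rainbow on the complete bipartite graph with parts `X`
and `Y`: all edges get pairwise distinct colors. -/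
def RainbowOn {α β C : Type*} (χ : α → β → C) (X : Finset α) (Y : Finset β) : Prop :=
  ∀ x ∈ X, ∀ y ∈ Y, ∀ x' ∈ X, ∀ y' ∈ Y, χ x y = χ x' y' → x = x' ∧ y = y'

/-- The edge-coloring `χ` is `X`-canonical on the complete bipartite graph with parts
`X` and `Y`: all edges at a vertex `x ∈ X` get one common color, and edges at distinct
vertices of `X` get distinct colors. Equivalently, two edges get equal colors iff they
have the same endpoint in `X`. -/
def XCanonicalOn {α β C : Type*} (χ : α → β → C) (X : Finset α) (Y : Finset β) : Prop :=
  ∀ x ∈ X, ∀ y ∈ Y, ∀ x' ∈ X, ∀ y' ∈ Y, (χ x y = χ x' y' ↔ x = x')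

/-- The edge-coloring `χ` is `Y`-canonical: two edges get equal colors iff they have the
same endpoint in `Y`. -/
def YCanonicalOn {α β C : Type*} (χ : α → β → C) (X : Finset α) (Y : Finset β) : Prop :=
  ∀ x ∈ X, ∀ y ∈ Y, ∀ x' ∈ X, ∀ y' ∈ Y, (χ x y = χ x' y' ↔ y = y')

/-- **Bipartite canonical Ramsey theorem.** For each `s > 0` there is `t > 0` such that
any edge-coloring of `K_{t,t}` (with colors in an arbitrary set `C`) admits subsets
`X'`, `Y'` of the two parts, of size `s` each, on which the coloring is monochromatic,
rainbow, `X'`-canonical or `Y'`-canonical. -/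
theorem bipartite_canonical_ramsey.{u} (s : ℕ) (hs : 0 < s) :
    ∃ t : ℕ, 0 < t ∧ ∀ (C : Type u) (χ : Fin t → Fin t → C),
      ∃ X' Y' : Finset (Fin t), X'.card = s ∧ Y'.card = s ∧
        (MonochromaticOn χ X' Y' ∨ RainbowOn χ X' Y' ∨
          XCanonicalOn χ X' Y' ∨ YCanonicalOn χ X' Y') := by
  classical
  obtain ⟨T, hT, hprod⟩ := ramsey_product' (Bool × Bool × Bool × Bool × Bool × Bool)
    (max s 3) (by omega)
  refine ⟨T, hT, fun C χ => ?_⟩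
  obtain ⟨X, Y, κ, hXcard, hYcard, hhom⟩ := hprod (fun x x' y y' =>
    (decide (χ x y = χ x y'), decide (χ x y = χ x' y), decide (χ x y = χ x' y'),
     decide (χ x y' = χ x' y), decide (χ x y' = χ x' y'), decide (χ x' y = χ x' y')))
  obtain ⟨k01, k02, k03, k12, k13, k23⟩ := κ
  -- The six "pattern" equivalences
  have E : ∀ x ∈ X, ∀ x' ∈ X, ∀ y ∈ Y, ∀ y' ∈ Y, x < x' → y < y' →
      ((χ x y = χ x y') ↔ k01 = true) ∧ ((χ x y = χ x' y) ↔ k02 = true) ∧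
      ((χ x y = χ x' y') ↔ k03 = true) ∧ ((χ x y' = χ x' y) ↔ k12 = true) ∧
      ((χ x y' = χ x' y') ↔ k13 = true) ∧ ((χ x' y = χ x' y') ↔ k23 = true) := by
    intro x hx x' hx' y hy y' hy' h1 h2
    have h := hhom x hx x' hx' y hy y' hy' h1 h2
    simp only [Prod.mk.injEq] at h
    obtain ⟨e1, e2, e3, e4, e5, e6⟩ := h
    refine ⟨?_, ?_, ?_, ?_, ?_, ?_⟩
    · rw [← e1, decide_eq_true_iff]
    · rw [← e2, decide_eq_true_iff]
    · rw [← e3, decide_eq_true_iff]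
    · rw [← e4, decide_eq_true_iff]
    · rw [← e5, decide_eq_true_iff]
    · rw [← e6, decide_eq_true_iff]
  obtain ⟨a1, a2, a3, ha1, ha2, ha3, h12, h23⟩ := exists_ordered_triple' X (by omega)
  obtain ⟨b1, b2, b3, hb1, hb2, hb3, g12, g23⟩ := exists_ordered_triple' Y (by omega)
  have h13 : a1 < a3 := h12.trans h23
  have g13 : b1 < b3 := g12.trans g23
  -- consistency facts
  have f1 : (k23 = true) ↔ (k01 = true) :=
    ((E a1 ha1 a2 ha2 b1 hb1 b2 hb2 h12 g12).2.2.2.2.2).symm.trans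
      (E a2 ha2 a3 ha3 b1 hb1 b2 hb2 h23 g12).1
  have f2 : (k13 = true) ↔ (k02 = true) :=
    ((E a1 ha1 a2 ha2 b1 hb1 b2 hb2 h12 g12).2.2.2.2.1).symm.trans
      (E a1 ha1 a2 ha2 b2 hb2 b3 hb3 h12 g23).2.1
  have f3 : k03 = true → k01 = true ∧ k02 = true := by
    intro h
    have h1 := (E a1 ha1 a3 ha3 b1 hb1 b2 hb2 h13 g12).2.2.1.mpr h
    have h2 := (E a2 ha2 a3 ha3 b1 hb1 b2 hb2 h23 g12).2.2.1.mpr h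
    have hc := (E a1 ha1 a2 ha2 b1 hb1 b2 hb2 h12 g12).2.1.mp (h1.trans h2.symm)
    have h3 := (E a1 ha1 a2 ha2 b1 hb1 b3 hb3 h12 g13).2.2.1.mpr h
    have h4 := (E a1 ha1 a2 ha2 b2 hb2 b3 hb3 h12 g23).2.2.1.mpr h
    have hr := (E a1 ha1 a2 ha2 b1 hb1 b2 hb2 h12 g12).1.mp (h3.trans h4.symm)
    exact ⟨hr, hc⟩
  have f4 : k12 = true → k01 = true ∧ k02 = true := by
    intro h
    have h1 := (E a1 ha1 a2 ha2 b1 hb1 b2 hb2 h12 g12).2.2.2.1.mpr h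
    have h2 := (E a1 ha1 a3 ha3 b1 hb1 b2 hb2 h13 g12).2.2.2.1.mpr h
    have hc := (E a2 ha2 a3 ha3 b1 hb1 b2 hb2 h23 g12).2.1.mp (h1.symm.trans h2)
    have h3 := (E a1 ha1 a2 ha2 b1 hb1 b3 hb3 h12 g13).2.2.2.1.mpr h
    have hr := (E a1 ha1 a2 ha2 b2 hb2 b3 hb3 h12 g23).1.mp (h1.trans h3.symm)
    exact ⟨hr, hc⟩
  -- row and column comparisons, needing no both-sided partner
  have rowIff : ∀ x ∈ X, ∀ y ∈ Y, ∀ y' ∈ Y, y < y' → ((χ x y = χ x y') ↔ k01 = true) := by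
    intro x hx y hy y' hy' hyy
    rcases lt_or_ge x a3 with h | h
    · exact (E x hx a3 ha3 y hy y' hy' h hyy).1
    · exact ((E a1 ha1 x hx y hy y' hy' (lt_of_lt_of_le h13 h) hyy).2.2.2.2.2).trans f1
  have colIff : ∀ x ∈ X, ∀ x' ∈ X, ∀ y ∈ Y, x < x' → ((χ x y = χ x' y) ↔ k02 = true) := by
    intro x hx x' hx' y hy hxx
    rcases lt_or_ge y b3 with h | h
    · exact (E x hx x' hx' y hy b3 hb3 hxx h).2.1
    · exact ((E x hx x' hx' b1 hb1 y hy hxx (lt_of_lt_of_le g13 h)).2.2.2.2.1).trans f2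
  -- helpers used in the case analysis
  have rowEq : k01 = true → ∀ x ∈ X, ∀ y ∈ Y, ∀ y' ∈ Y, χ x y = χ x y' := by
    intro h01 x hx y hy y' hy'
    rcases lt_trichotomy y y' with h | rfl | h
    · exact (rowIff x hx y hy y' hy' h).mpr h01
    · rfl
    · exact ((rowIff x hx y' hy' y hy h).mpr h01).symm
  have colEq : k02 = true → ∀ y ∈ Y, ∀ x ∈ X, ∀ x' ∈ X, χ x y = χ x' y := by
    intro h02 y hy x hx x' hx'
    rcases lt_trichotomy x x' with h | rfl | h
    · exact (colIff x hx x' hx' y hy h).mpr h02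
    · rfl
    · exact ((colIff x' hx' x hx y hy h).mpr h02).symm
  have neqRow : k01 = false → ∀ x ∈ X, ∀ y ∈ Y, ∀ y' ∈ Y, y ≠ y' → χ x y ≠ χ x y' := by
    intro h01 x hx y hy y' hy' hne heq
    rcases lt_or_gt_of_ne hne with h | h
    · have := (rowIff x hx y hy y' hy' h).mp heq
      rw [h01] at this; exact Bool.false_ne_true this
    · have := (rowIff x hx y' hy' y hy h).mp heq.symm
      rw [h01] at this; exact Bool.false_ne_true this
  have neqCol : k02 = false → ∀ x ∈ X, ∀ x' ∈ X, ∀ y ∈ Y, x ≠ x' → χ x y ≠ χ x' y := by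
    intro h02 x hx x' hx' y hy hne heq
    rcases lt_or_gt_of_ne hne with h | h
    · have := (colIff x hx x' hx' y hy h).mp heq
      rw [h02] at this; exact Bool.false_ne_true this
    · have := (colIff x' hx' x hx y hy h).mp heq.symm
      rw [h02] at this; exact Bool.false_ne_true this
  have neqDaux : k03 = false → k12 = false →
      ∀ x ∈ X, ∀ x' ∈ X, ∀ y ∈ Y, ∀ y' ∈ Y, x < x' → y ≠ y' → χ x y ≠ χ x' y' := by
    intro h03 h12' x hx x' hx' y hy y' hy' hxx hne heq
    rcases lt_or_gt_of_ne hne with h | h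
    · have := (E x hx x' hx' y hy y' hy' hxx h).2.2.1.mp heq
      rw [h03] at this; exact Bool.false_ne_true this
    · have := (E x hx x' hx' y' hy' y hy hxx h).2.2.2.1.mp heq
      rw [h12'] at this; exact Bool.false_ne_true this
  have neqD : k03 = false → k12 = false →
      ∀ x ∈ X, ∀ x' ∈ X, ∀ y ∈ Y, ∀ y' ∈ Y, x ≠ x' → y ≠ y' → χ x y ≠ χ x' y' := by
    intro h03 h12' x hx x' hx' y hy y' hy' hne hne' heq
    rcases lt_or_gt_of_ne hne with h | h
    · exact neqDaux h03 h12' x hx x' hx' y hy y' hy' h hne' heq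
    · exact neqDaux h03 h12' x' hx' x hx y' hy' y hy h (Ne.symm hne') heq.symm
  -- shrink to size s
  obtain ⟨X', hX'sub, hX'card⟩ := exists_subset_card_eq (show s ≤ X.card by omega)
  obtain ⟨Y', hY'sub, hY'card⟩ := exists_subset_card_eq (show s ≤ Y.card by omega)
  refine ⟨X', Y', hX'card, hY'card, ?_⟩
  by_cases h01 : k01 = true <;> by_cases h02 : k02 = true
  · -- monochromatic
    left
    intro x hx y hy x' hx' y' hy'
    exact (rowEq h01 x (hX'sub hx) y (hY'sub hy) y' (hY'sub hy')).trans
      (colEq h02 y' (hY'sub hy') x (hX'sub hx) x' (hX'sub hx'))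
  · -- X-canonical
    rw [Bool.not_eq_true] at h02
    have h03 : k03 = false := by
      rcases Bool.eq_false_or_eq_true k03 with h | h
      · rw [(f3 h).2] at h02; exact absurd h02 (by simp)
      · exact h
    have hk12 : k12 = false := by
      rcases Bool.eq_false_or_eq_true k12 with h | h
      · rw [(f4 h).2] at h02; exact absurd h02 (by simp)
      · exact h
    right; right; left
    intro x hx y hy x' hx' y' hy'
    have hx0 := hX'sub hx
    have hx0' := hX'sub hx'
    have hy0 := hY'sub hy
    have hy0' := hY'sub hy'
    constructor
    · intro heq
      by_contra hne
      by_cases hyy : y = y'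
      · subst hyy; exact neqCol h02 x hx0 x' hx0' y hy0 hne heq
      · exact neqD h03 hk12 x hx0 x' hx0' y hy0 y' hy0' hne hyy heq
    · rintro rfl
      exact rowEq h01 x hx0 y hy0 y' hy0'
  · -- Y-canonical
    rw [Bool.not_eq_true] at h01
    have h03 : k03 = false := by
      rcases Bool.eq_false_or_eq_true k03 with h | h
      · rw [(f3 h).1] at h01; exact absurd h01 (by simp)
      · exact h
    have hk12 : k12 = false := by
      rcases Bool.eq_false_or_eq_true k12 with h | h
      · rw [(f4 h).1] at h01; exact absurd h01 (by simp)
      · exact h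
    right; right; right
    intro x hx y hy x' hx' y' hy'
    have hx0 := hX'sub hx
    have hx0' := hX'sub hx'
    have hy0 := hY'sub hy
    have hy0' := hY'sub hy'
    constructor
    · intro heq
      by_contra hne
      by_cases hxx : x = x'
      · subst hxx; exact neqRow h01 x hx0 y hy0 y' hy0' hne heq
      · exact neqD h03 hk12 x hx0 x' hx0' y hy0 y' hy0' hxx hne heq
    · rintro rfl
      exact colEq h02 y hy0 x hx0 x' hx0'
  · -- rainbow
    rw [Bool.not_eq_true] at h01 h02
    have h03 : k03 = false := by
      rcases Bool.eq_false_or_eq_true k03 with h | h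
      · rw [(f3 h).2] at h02; exact absurd h02 (by simp)
      · exact h
    have hk12 : k12 = false := by
      rcases Bool.eq_false_or_eq_true k12 with h | h
      · rw [(f4 h).2] at h02; exact absurd h02 (by simp)
      · exact h
    right; left
    intro x hx y hy x' hx' y' hy' heq
    have hx0 := hX'sub hx
    have hx0' := hX'sub hx'
    have hy0 := hY'sub hy
    have hy0' := hY'sub hy'
    have hxx : x = x' := by
      by_contra hne
      by_cases hyy : y = y'
      · subst hyy; exact neqCol h02 x hx0 x' hx0' y hy0 hne heq
      · exact neqD h03 hk12 x hx0 x' hx0' y hy0 y' hy0' hne hyy heq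
    subst hxx
    refine ⟨rfl, ?_⟩
    by_contra hne
    exact neqRow h01 x hx0 y hy0 y' hy0' hne heq
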